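/- arXiv:2304.10697 — 6 statements merged into one kernel-verified Lean document; each statement's English description precedes it below -/
import Mathlib

section
/- For the signed permutation matrix ẘ associated to a permutation w of [n] (with entries ±1 at positions (w(j),j) chosen so all left-justified minors are nonnegative), the identity (w⁻¹)° = δₙ (ẘ)⁻¹ δₙ holds, where δₙ = Diag(1, -1, 1, ..., (-1)^{n-1}). -/
open Matrix BigOperators

noncomputable section

/-- The left-justified minor of `A` with rows the elements of `S` (in increasing order)
and columns `{0, ..., S.card - 1}`. -/
def lminor {n : ℕ} (A : Matrix (Fin n) (Fin n) ℂ) (S : Finset (Fin n)) : ℂ :=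
  (A.submatrix (⇑(S.orderEmbOfFin rfl))
    (Fin.castLE (by simpa using S.card_le_univ))).det

/-- `W` is the signed permutation matrix `ẘ` of `w`: it has entries `±1` at positions
`(w j, j)` and `0` elsewhere, and all its left-justified minors are nonnegative reals. -/
def IsSignedPermMatrix {n : ℕ} (w : Equiv.Perm (Fin n)) (W : Matrix (Fin n) (Fin n) ℂ) : Prop :=
  (∀ i j, (i = w j → W i j = 1 ∨ W i j = -1) ∧ (i ≠ w j → W i j = 0)) ∧
  ∀ S : Finset (Fin n), ∃ r : ℝ, 0 ≤ r ∧ lminor W S = (r : ℂ)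

/-- The diagonal matrix `δₙ = Diag(1, -1, 1, ..., (-1)^{n-1})`. -/
def deltaMat (n : ℕ) : Matrix (Fin n) (Fin n) ℂ :=
  Matrix.diagonal fun i => (-1 : ℂ) ^ (i : ℕ)

/-!
On the rows `w({0,…,k-1})` and the first `k` columns, `ẘ` is a monomial matrix, so that minor is
the sign of the sorting permutation times the product of the entries in those columns. The sign
is `∏ (-1)^{inv_j}`, where `inv_j` counts the `i < j` with `w i > w j`, and every minor is `±1`;
nonnegativity for `k = j` and `k = j + 1` therefore forces `ẘ_{w j, j} = (-1)^{inv_j}`. In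
particular `ẘ⁻¹ = ẘᵀ`, and the theorem reduces to the counting identity
`inv_{w j}(w⁻¹) + j = w j + inv_j(w)`.
-/

namespace Matrix

variable {ι R : Type*} [Fintype ι] [DecidableEq ι] [CommRing R]

theorem det_of_apply_eq_ite {M : Matrix ι ι R} (σ : Equiv.Perm ι) (d : ι → R)
    (hM : ∀ a b, M a b = if a = σ b then d b else 0) :
    M.det = Equiv.Perm.sign σ * ∏ b, d b := by
  have hM' : M = (diagonal d).submatrix ⇑σ⁻¹ id := by
    ext a b
    simp only [hM, submatrix_apply, diagonal_apply, id, Equiv.Perm.inv_eq_iff_eq]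
    split_ifs with h <;> simp [h]
  rw [hM', det_permute, det_diagonal, Equiv.Perm.sign_inv]

theorem inv_eq_transpose_of_apply_eq_ite {M : Matrix ι ι R} (σ : Equiv.Perm ι) (d : ι → R)
    (hd : ∀ b, d b * d b = 1) (hM : ∀ a b, M a b = if a = σ b then d b else 0) :
    M⁻¹ = Mᵀ := by
  refine inv_eq_right_inv ?_
  ext a c
  simp only [mul_apply, transpose_apply, hM, one_apply, ← Equiv.Perm.inv_eq_iff_eq (f := σ)]
  simp [ite_mul, mul_ite, hd]

end Matrix

open Finset

theorem neg_one_pow_mul_self {R : Type*} [Monoid R] [HasDistribNeg R] (k : ℕ) :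
    (-1 : R) ^ k * (-1) ^ k = 1 := by
  rw [← pow_add, (Even.add_self k).neg_one_pow]

namespace Equiv.Perm

variable {n : ℕ}

def leftInversions (σ : Perm (Fin n)) (j : Fin n) : ℕ :=
  #{i ∈ Iio j | σ j < σ i}

theorem sign_eq_prod_neg_one_pow_leftInversions (σ : Perm (Fin n)) :
    sign σ = ∏ j, (-1) ^ σ.leftInversions j := by
  rw [sign_eq_prod_prod_Iio]
  refine prod_congr rfl fun j _ => ?_
  rw [prod_ite, prod_const_one, one_mul, prod_const, leftInversions]
  congr 2
  refine filter_congr fun i hi => ?_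
  have hne : σ i ≠ σ j := σ.injective.ne (mem_Iio.1 hi).ne
  exact ⟨fun h => lt_of_le_of_ne (not_lt.1 h) hne.symm, fun h => h.not_gt⟩

theorem leftInversions_castLE {k : ℕ} (hk : k ≤ n) (τ : Perm (Fin k)) (w : Perm (Fin n))
    (f : Fin k ↪o Fin n) (h : ∀ b, f (τ b) = w (Fin.castLE hk b)) (b : Fin k) :
    τ.leftInversions b = w.leftInversions (Fin.castLE hk b) := by
  rw [leftInversions, leftInversions, ← Fin.map_castLEEmb_Iio, filter_map, card_map]
  congr 1
  refine filter_congr fun a _ => ?_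
  simp only [Function.comp_apply, Fin.castLEEmb_apply, ← h, f.lt_iff_lt]

theorem leftInversions_eq_sum (σ : Perm (Fin n)) (j : Fin n) :
    σ.leftInversions j = ∑ i, if i < j ∧ σ j < σ i then 1 else 0 := by
  rw [leftInversions, ← filter_gt_eq_Iio, filter_filter, card_filter]

theorem leftInversions_inv_apply_add (w : Perm (Fin n)) (j : Fin n) :
    w⁻¹.leftInversions (w j) + j = w j + w.leftInversions j := by
  have hcard (m : Fin n) : (m : ℕ) = ∑ i, if i < m then 1 else 0 := by
    rw [← card_filter, filter_gt_eq_Iio, Fin.card_Iio]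
  have hinv : w⁻¹.leftInversions (w j) = ∑ i, if w i < w j ∧ j < i then 1 else 0 := by
    rw [leftInversions_eq_sum, ← Equiv.sum_comp w]
    simp only [coe_inv, symm_apply_apply]
  have hbelow : (w j : ℕ) = ∑ i, if w i < w j then 1 else 0 := by
    rw [hcard, ← Equiv.sum_comp w]
  rw [hinv, hbelow, hcard j, leftInversions_eq_sum, ← sum_add_distrib, ← sum_add_distrib]
  -- summand by summand, according as `i < j`, `i = j` or `j < i`
  refine sum_congr rfl fun i _ => ?_
  have hinj := w.injective.ne_iff (x := i) (y := j)
  split_ifs <;> grind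

theorem neg_one_pow_leftInversions_inv_apply {R : Type*} [CommRing R]
    (w : Perm (Fin n)) (j : Fin n) :
    (-1 : R) ^ w⁻¹.leftInversions (w j) =
      (-1) ^ (j : ℕ) * (-1) ^ w.leftInversions j * (-1) ^ (w j : ℕ) := by
  calc (-1 : R) ^ w⁻¹.leftInversions (w j)
        = (-1) ^ (w⁻¹.leftInversions (w j) + j) * (-1) ^ (j : ℕ) := by
        rw [pow_add, mul_assoc, neg_one_pow_mul_self, mul_one]
    _ = _ := by
        rw [leftInversions_inv_apply_add]
        ring

end Equiv.Perm

theorem Finset.exists_perm_orderEmbOfFin {α : Type*} [LinearOrder α] (S : Finset α)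
    (g : Fin #S → α) (hg : Function.Injective g) (hgS : ∀ b, g b ∈ S) :
    ∃ τ : Equiv.Perm (Fin #S), ∀ b, S.orderEmbOfFin rfl (τ b) = g b := by
  let t : Fin #S → Fin #S := fun b => (S.orderIsoOfFin rfl).symm ⟨g b, hgS b⟩
  have ht : Function.Injective t := fun a b h =>
    hg (congrArg Subtype.val ((S.orderIsoOfFin rfl).symm.injective h))
  refine ⟨Equiv.ofBijective t (Finite.injective_iff_bijective.1 ht), fun b => ?_⟩
  simp only [t, Equiv.ofBijective_apply, ← coe_orderIsoOfFin_apply, OrderIso.apply_symm_apply]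

section SignedPermMatrix

variable {n : ℕ} {w : Equiv.Perm (Fin n)} {W : Matrix (Fin n) (Fin n) ℂ}

theorem lminor_image_eq_prod (hW : ∀ i j, i ≠ w j → W i j = 0) {T : Finset (Fin n)}
    (hT : ∀ i, i ∈ T ↔ (i : ℕ) < #T) :
    lminor W (T.image w) = ∏ i ∈ T, (-1) ^ w.leftInversions i * W (w i) i := by
  set S := T.image w
  have hST : #S = #T := card_image_of_injective T w.injective
  have hS : #S ≤ n := by simpa using S.card_le_univ
  obtain ⟨τ, hτ⟩ := S.exists_perm_orderEmbOfFin (fun b => w (Fin.castLE hS b))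
    (w.injective.comp (Fin.castLE_injective hS))
    (fun b => mem_image_of_mem w ((hT _).2 (hST ▸ b.2)))
  rw [lminor, det_of_apply_eq_ite τ (fun b => W (w (Fin.castLE hS b)) (Fin.castLE hS b))]
  · rw [τ.sign_eq_prod_neg_one_pow_leftInversions]
    push_cast
    rw [← prod_mul_distrib]
    simp_rw [Equiv.Perm.leftInversions_castLE hS τ w _ hτ]
    have hT' : T = univ.map (Fin.castLEEmb hS) := by
      ext i
      simp only [hT, mem_map, mem_univ, true_and, Fin.castLEEmb_apply]
      exact ⟨fun h => ⟨⟨i, by omega⟩, rfl⟩, by rintro ⟨a, rfl⟩; simp [← hST]⟩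
    rw [hT', prod_map]
    rfl
  · intro a b
    simp only [submatrix_apply]
    split_ifs with h
    · rw [h, hτ]
    · exact hW _ _ (by rwa [← hτ, (S.orderEmbOfFin rfl).injective.ne_iff])

end SignedPermMatrix

namespace IsSignedPermMatrix

variable {n : ℕ} {w : Equiv.Perm (Fin n)} {W : Matrix (Fin n) (Fin n) ℂ}

theorem apply_of_ne (hW : IsSignedPermMatrix w W) {i j : Fin n} (h : i ≠ w j) : W i j = 0 :=
  (hW.1 i j).2 h

theorem prod_neg_one_pow_mul_apply_eq_one (hW : IsSignedPermMatrix w W) {T : Finset (Fin n)}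
    (hT : ∀ i, i ∈ T ↔ (i : ℕ) < #T) :
    ∏ i ∈ T, (-1) ^ w.leftInversions i * W (w i) i = 1 := by
  obtain ⟨r, hr, hminor⟩ := hW.2 (T.image w)
  rw [lminor_image_eq_prod (fun _ _ => hW.apply_of_ne) hT] at hminor
  have hsq : (∏ i ∈ T, (-1) ^ w.leftInversions i * W (w i) i) *
      (∏ i ∈ T, (-1) ^ w.leftInversions i * W (w i) i) = 1 := by
    rw [← prod_mul_distrib]
    refine prod_eq_one fun i _ => ?_
    rw [mul_mul_mul_comm, neg_one_pow_mul_self, one_mul]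
    rcases (hW.1 (w i) i).1 rfl with h | h <;> rw [h] <;> norm_num
  rcases mul_self_eq_one_iff.1 hsq with h | h
  · exact h
  · rw [h] at hminor
    have : r = -1 := by exact_mod_cast hminor.symm
    linarith

theorem apply_self (hW : IsSignedPermMatrix w W) (j : Fin n) :
    W (w j) j = (-1) ^ w.leftInversions j := by
  have hIio := hW.prod_neg_one_pow_mul_apply_eq_one (T := Iio j) fun i => by
    rw [mem_Iio, Fin.card_Iio, Fin.lt_def]
  have hIic := hW.prod_neg_one_pow_mul_apply_eq_one (T := Iic j) fun i => by
    rw [mem_Iic, Fin.card_Iic, Fin.le_def, Nat.lt_succ_iff]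
  rw [← Iio_insert, prod_insert notMem_Iio_self, hIio, mul_one] at hIic
  calc W (w j) j = (-1) ^ w.leftInversions j * ((-1) ^ w.leftInversions j * W (w j) j) := by
        rw [← mul_assoc, neg_one_pow_mul_self, one_mul]
    _ = (-1) ^ w.leftInversions j := by rw [hIic, mul_one]

theorem apply_eq_ite (hW : IsSignedPermMatrix w W) (i j : Fin n) :
    W i j = if i = w j then (-1) ^ w.leftInversions j else 0 := by
  split_ifs with h
  · exact h ▸ hW.apply_self j
  · exact hW.apply_of_ne h

theorem inv_eq_transpose (hW : IsSignedPermMatrix w W) : W⁻¹ = Wᵀ :=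
  inv_eq_transpose_of_apply_eq_ite w _ (fun _ => neg_one_pow_mul_self _) hW.apply_eq_ite

end IsSignedPermMatrix

/-- `(w⁻¹)° = δₙ ẘ⁻¹ δₙ`. -/
theorem stmt0 {n : ℕ} (w : Equiv.Perm (Fin n)) (W W' : Matrix (Fin n) (Fin n) ℂ)
    (hW : IsSignedPermMatrix w W) (hW' : IsSignedPermMatrix w⁻¹ W') :
    W' = deltaMat n * W⁻¹ * deltaMat n := by
  rw [hW.inv_eq_transpose]
  ext i j
  rw [deltaMat, mul_diagonal, diagonal_mul, transpose_apply, hW.apply_eq_ite, hW'.apply_eq_ite]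
  by_cases h : j = w i
  · subst h
    rw [if_pos (by simp), if_pos rfl, Equiv.Perm.neg_one_pow_leftInversions_inv_apply]
  · rw [if_neg (by rwa [Equiv.Perm.eq_inv_iff_eq, eq_comm]), if_neg h, mul_zero, zero_mul]
end
end

section
/- Let g ∈ GL_n(ℂ) with Bruhat factorization g = b ẘ b' where b, b' are upper triangular and ẘ is the signed permutation matrix of w ∈ S_n. Then for every 0 ≤ k ≤ n, the left-justified minor Δ_{w([k])}(g) equals Δ_{w([k]),w([k])}(b) · Δ_{[k],[k]}(b'). -/
open Matrix BigOperators

noncomputable section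

/-- The principal-type minor `Δ_{S,S}(A)` with rows and columns the elements of `S`
(in increasing order). -/
def pminor {n : ℕ} (A : Matrix (Fin n) (Fin n) ℂ) (S : Finset (Fin n)) : ℂ :=
  (A.submatrix (⇑(S.orderEmbOfFin rfl)) (⇑(S.orderEmbOfFin rfl))).det

/-- The set `w([k]) = {w(1), ..., w(k)}`. -/
def wSet {n : ℕ} (w : Equiv.Perm (Fin n)) (k : ℕ) (hk : k ≤ n) : Finset (Fin n) :=
  Finset.image (fun j : Fin k => w (Fin.castLE hk j)) Finset.univ

lemma lminor_eq_det {n k : ℕ} (A : Matrix (Fin n) (Fin n) ℂ) (S : Finset (Fin n))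
    (h : S.card = k) (hk : k ≤ n) :
    lminor A S = (A.submatrix (⇑(S.orderEmbOfFin h)) (Fin.castLE hk)).det := by
  subst h; rfl

lemma pminor_eq_det {n k : ℕ} (A : Matrix (Fin n) (Fin n) ℂ) (S : Finset (Fin n))
    (h : S.card = k) :
    pminor A S = (A.submatrix (⇑(S.orderEmbOfFin h)) (⇑(S.orderEmbOfFin h))).det := by
  subst h; rfl

/-- for a Bruhat factorization `g = b ẘ b'` with `b, b'` upper triangular,
`Δ_{w([k])}(g) = Δ_{w([k]),w([k])}(b) · Δ_{[k],[k]}(b')` for all `0 ≤ k ≤ n`. -/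
theorem stmt1 {n : ℕ} (w : Equiv.Perm (Fin n)) (g b b' W : Matrix (Fin n) (Fin n) ℂ)
    (hW : IsSignedPermMatrix w W)
    (hb : b.BlockTriangular id) (hb' : b'.BlockTriangular id)
    (hg : g = b * W * b') (k : ℕ) (hk : k ≤ n) :
    lminor g (wSet w k hk) = pminor b (wSet w k hk) * lminor b' (wSet 1 k hk) := by
  classical
  have hcard : (wSet w k hk).card = k := by
    rw [wSet, Finset.card_image_of_injective _
      (fun a c hac => Fin.castLE_injective hk (w.injective hac)),
      Finset.card_univ, Fintype.card_fin]
  have hcard1 : (wSet 1 k hk).card = k := by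
    rw [wSet, Finset.card_image_of_injective _
      (fun a c hac => Fin.castLE_injective hk ((1 : Equiv.Perm (Fin n)).injective hac)),
      Finset.card_univ, Fintype.card_fin]
  set S : Finset (Fin n) := wSet w k hk with hSdef
  set e : Fin k → Fin n := ⇑(S.orderEmbOfFin hcard) with he
  have heS : ∀ l, e l ∈ S := fun l => Finset.orderEmbOfFin_mem S hcard l
  have hmemS : ∀ v : Fin n, v ∈ S ↔ ((w.symm v : Fin n) : ℕ) < k := by
    intro v
    rw [hSdef, wSet]
    simp only [Finset.mem_image, Finset.mem_univ, true_and]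
    constructor
    · rintro ⟨j, rfl⟩
      simpa using j.isLt
    · intro hv
      exact ⟨⟨((w.symm v : Fin n) : ℕ), hv⟩, by
        have : Fin.castLE hk ⟨((w.symm v : Fin n) : ℕ), hv⟩ = w.symm v := Fin.ext rfl
        rw [this]; simp⟩
  have hlt : ∀ l : Fin k, ((w.symm (e l) : Fin n) : ℕ) < k := fun l => (hmemS _).1 (heS l)
  set u0 : Fin k → Fin k := fun l => ⟨((w.symm (e l) : Fin n) : ℕ), hlt l⟩ with hu0
  have hcastu0 : ∀ l, Fin.castLE hk (u0 l) = w.symm (e l) := fun l => Fin.ext rfl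
  -- b' vanishing below row k on the first k columns
  have hb'0 : ∀ (v : Fin n) (j : Fin k), k ≤ (v : ℕ) → b' v (Fin.castLE hk j) = 0 := by
    intro v j hv
    apply hb'
    show Fin.castLE hk j < v
    rw [Fin.lt_def]
    exact lt_of_lt_of_le j.isLt hv
  -- the product (W * b') on the first k columns
  have hWb' : ∀ (v : Fin n) (j : Fin k),
      (W * b') v (Fin.castLE hk j) = W v (w.symm v) * b' (w.symm v) (Fin.castLE hk j) := by
    intro v j
    rw [Matrix.mul_apply]
    refine Finset.sum_eq_single (w.symm v) ?_ (by simp)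
    intro t _ ht
    have : W v t = 0 := (hW.1 v t).2 (fun h => ht (by rw [h]; simp))
    rw [this, zero_mul]
  have hWb'_zero : ∀ v : Fin n, v ∉ S → ∀ j : Fin k, (W * b') v (Fin.castLE hk j) = 0 := by
    intro v hv j
    rw [hWb', hb'0 _ _ (le_of_not_gt (fun h => hv ((hmemS v).2 h))), mul_zero]
  -- sums over functions supported on S
  have himg : S = Finset.image e Finset.univ := by
    ext v
    simp only [Finset.mem_image, Finset.mem_univ, true_and]
    constructor
    · intro hv
      have : v ∈ Set.range e := by
        rw [he, Finset.range_orderEmbOfFin]; exact hv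
      obtain ⟨l, hl⟩ := this
      exact ⟨l, hl⟩
    · rintro ⟨l, rfl⟩; exact heS l
  have hSsum : ∀ F : Fin n → ℂ, (∀ v ∉ S, F v = 0) → ∑ v, F v = ∑ l : Fin k, F (e l) := by
    intro F hF
    rw [← Finset.sum_subset (Finset.subset_univ S) (fun x _ hx => hF x hx), himg,
      Finset.sum_image (fun a _ c _ hac => (S.orderEmbOfFin hcard).injective hac)]
  -- the three small matrices
  set B : Matrix (Fin k) (Fin k) ℂ := b.submatrix e e with hB
  set W' : Matrix (Fin k) (Fin k) ℂ := W.submatrix e (Fin.castLE hk) with hW'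
  set T : Matrix (Fin k) (Fin k) ℂ := b'.submatrix (Fin.castLE hk) (Fin.castLE hk) with hT
  have hWT : ∀ (l j : Fin k), (W' * T) l j = (W * b') (e l) (Fin.castLE hk j) := by
    intro l j
    rw [Matrix.mul_apply, hWb']
    refine Finset.sum_eq_single (u0 l) ?_ (by simp)
    · intro u _ hu
      have hne : e l ≠ w (Fin.castLE hk u) := by
        intro h
        apply hu
        apply Fin.ext
        have : Fin.castLE hk u = w.symm (e l) := by rw [h]; simp
        have := congrArg Fin.val this
        simpa using this
      have h0 : W (e l) (Fin.castLE hk u) = 0 := (hW.1 _ _).2 hne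
      rw [hW', Matrix.submatrix_apply, h0, zero_mul]
  have hC : g.submatrix e (Fin.castLE hk) = B * (W' * T) := by
    ext i j
    rw [Matrix.submatrix_apply, hg, mul_assoc, Matrix.mul_apply,
      hSsum _ (fun v hv => by rw [hWb'_zero v hv j, mul_zero]), Matrix.mul_apply]
    refine Finset.sum_congr rfl (fun l _ => ?_)
    rw [hWT]
    rfl
  -- W' is orthogonal-like, so det W' = ±1
  have hWW : W' * W'ᵀ = 1 := by
    ext l m
    rw [Matrix.mul_apply]
    have hterm : ∀ u : Fin k, u ≠ u0 l → W' l u * W'ᵀ u m = 0 := by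
      intro u hu
      have hne : e l ≠ w (Fin.castLE hk u) := by
        intro h
        apply hu
        apply Fin.ext
        have : Fin.castLE hk u = w.symm (e l) := by rw [h]; simp
        have := congrArg Fin.val this
        simpa using this
      have h0 : W (e l) (Fin.castLE hk u) = 0 := (hW.1 _ _).2 hne
      rw [hW', Matrix.transpose_apply, Matrix.submatrix_apply, h0, zero_mul]
    rw [Finset.sum_eq_single (u0 l) (fun u _ hu => hterm u hu) (by simp)]
    rw [hW', Matrix.transpose_apply, Matrix.submatrix_apply, Matrix.submatrix_apply, hcastu0]
    by_cases hlm : l = m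
    · subst hlm
      rcases (hW.1 (e l) (w.symm (e l))).1 (by simp) with h | h <;>
        simp [h, Matrix.one_apply]
    · have hne : e m ≠ w (w.symm (e l)) := by
        simp only [Equiv.apply_symm_apply]
        exact fun h => hlm ((S.orderEmbOfFin hcard).injective h).symm
      rw [(hW.1 _ _).2 hne, mul_zero, Matrix.one_apply_ne hlm]
  have hdetW' : W'.det = 1 ∨ W'.det = -1 := by
    have : W'.det * W'.det = 1 := by
      have := congrArg Matrix.det hWW
      rwa [Matrix.det_mul, Matrix.det_transpose, Matrix.det_one] at this
    exact mul_self_eq_one_iff.1 this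
  have hlW : lminor W S = W'.det := by rw [lminor_eq_det W S hcard hk, hW']
  have hdetW1 : W'.det = 1 := by
    obtain ⟨r, hr0, hr⟩ := hW.2 S
    rcases hdetW' with h | h
    · exact h
    · exfalso
      rw [hlW, h] at hr
      have : r = -1 := by
        have := hr.symm
        exact_mod_cast this
      linarith
  -- the identity-permutation minor of b'
  have hemb : ⇑((wSet 1 k hk).orderEmbOfFin hcard1) = Fin.castLE hk := by
    have : (Fin.castLEOrderEmb hk : Fin k ↪o Fin n) = (wSet 1 k hk).orderEmbOfFin hcard1 := by
      apply Finset.orderEmbOfFin_unique' hcard1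
      intro x
      rw [wSet]
      simp only [Finset.mem_image, Finset.mem_univ, true_and]
      exact ⟨x, by simp⟩
    rw [← this]; rfl
  have hlb' : lminor b' (wSet 1 k hk) = T.det := by
    rw [lminor_eq_det b' (wSet 1 k hk) hcard1 hk, hemb, hT]
  -- assemble
  rw [lminor_eq_det g S hcard hk, ← he, hC, Matrix.det_mul, Matrix.det_mul, hdetW1, one_mul,
    pminor_eq_det b S hcard, ← he, ← hB, hlb']
end
end

section
/- Let M be an n×n Hermitian matrix with spectral decomposition M = g·Diag(ν)·g⁻¹, ν₁ ≥ ... ≥ νₙ, g unitary, and let M_T = A*MA be its tridiagonalization via the cyclic subspace of e₁. Then the eigenvalues of M_T are distinct, and the set of eigenvalues of M_T equals {ν_i : 1 ≤ i ≤ n and g_{1,i} ≠ 0}. -/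
/-!
Write `D = diag(ν)` and `c = g⁻¹ e₁ = (conj g₁ᵢ)ᵢ`. Since `g⁻¹ M = D g⁻¹`, the Krylov space
`K(M, e₁)` is the image under `g` of `K(D, c)`. Grouping the coordinates of `c` by the value of
`ν` splits `c` into components `c_λ`, one for each `λ ∈ Λ = {νᵢ : g₁ᵢ ≠ 0}`: they are
eigenvectors of `D` for distinct eigenvalues, and Lagrange interpolation on the nodes `Λ` puts
each of them in `K(D, c)`, so they form a basis of it and `m = dim K(M, e₁) = |Λ|`.

The Krylov vectors `v, Mv, M²v, …` stay independent until one of them falls into the span of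
its predecessors, after which that span is `M`-invariant; hence the first `m` of them already
span `K(M, e₁)`, and Gram–Schmidt makes `A` an isometry onto it. So `A*MA` is the compression of
`M` to an invariant subspace, and its eigenvalues are those of `D` on `K(D, c)`, namely `Λ`.
-/

open Matrix BigOperators

noncomputable section

/-- The Gram–Schmidt orthonormalization of the Krylov vectors
`e₁, M e₁, M² e₁, ...` of a matrix `M`, as vectors in `EuclideanSpace ℂ (Fin (n+1))`. -/
def krylovGS {n : ℕ} (M : Matrix (Fin (n + 1)) (Fin (n + 1)) ℂ) (m : ℕ) (j : Fin m) :
    EuclideanSpace ℂ (Fin (n + 1)) :=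
  @InnerProductSpace.gramSchmidtNormed ℂ (EuclideanSpace ℂ (Fin (n + 1))) _ _ _ (Fin m) _
    (inferInstance : LocallyFiniteOrderBot (Fin m))
    (inferInstance : WellFoundedLT (Fin m))
    (fun l : Fin m =>
      (WithLp.equiv 2 (Fin (n + 1) → ℂ)).symm ((M ^ (l : ℕ)).mulVec (Pi.single 0 1))) j

open Module Submodule Polynomial

namespace Matrix

section Krylov

variable {R n : Type*} [CommRing R] [Fintype n] [DecidableEq n]

def krylov (M : Matrix n n R) (v : n → R) : Submodule R (n → R) :=
  span R (Set.range fun j : ℕ => (M ^ j) *ᵥ v)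

def krylovLT (M : Matrix n n R) (v : n → R) (k : ℕ) : Submodule R (n → R) :=
  span R (Set.range fun j : Fin k => (M ^ (j : ℕ)) *ᵥ v)

variable (M : Matrix n n R) (v : n → R)

lemma pow_mulVec_mem_krylov (j : ℕ) : (M ^ j) *ᵥ v ∈ krylov M v :=
  subset_span ⟨j, rfl⟩

lemma pow_mulVec_mem_krylovLT {j k : ℕ} (hjk : j < k) : (M ^ j) *ᵥ v ∈ krylovLT M v k :=
  subset_span ⟨⟨j, hjk⟩, rfl⟩

lemma krylovLT_le_krylov (k : ℕ) : krylovLT M v k ≤ krylov M v :=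
  span_le.2 <| Set.range_subset_iff.2 fun j => pow_mulVec_mem_krylov M v j

lemma krylovLT_mono : Monotone (krylovLT M v) := fun _ _ hjk =>
  span_le.2 <| Set.range_subset_iff.2 fun i => pow_mulVec_mem_krylovLT M v (i.2.trans_le hjk)

lemma mulVec_mem_krylov {w : n → R} (hw : w ∈ krylov M v) : M *ᵥ w ∈ krylov M v := by
  refine (map_span_le M.mulVecLin _ (krylov M v)).2 ?_ ⟨w, hw, rfl⟩
  rintro _ ⟨j, rfl⟩
  rw [mulVecLin_apply, mulVec_mulVec, ← pow_succ']
  exact pow_mulVec_mem_krylov M v (j + 1)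

lemma aeval_mulVec_mem_krylov (p : R[X]) : aeval M p *ᵥ v ∈ krylov M v := by
  rw [aeval_eq_sum_range, sum_mulVec]
  refine sum_mem fun j _ => ?_
  rw [smul_mulVec]
  exact smul_mem _ _ (pow_mulVec_mem_krylov M v j)

lemma map_krylov_of_mul_eq_mul {N P : Matrix n n R} (h : P * M = N * P) :
    (krylov M v).map P.mulVecLin = krylov N (P *ᵥ v) := by
  rw [krylov, krylov, map_span, ← Set.range_comp]
  congr 2
  funext j
  simp only [Function.comp_apply, mulVecLin_apply, mulVec_mulVec, (SemiconjBy.pow_right h j).eq]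

/-- Once `Mᵏ v` lies in the span of the previous Krylov vectors, that span is `M`-invariant. -/
lemma krylov_eq_krylovLT_of_mem {k : ℕ} (hk : (M ^ k) *ᵥ v ∈ krylovLT M v k) :
    krylov M v = krylovLT M v k := by
  have hle : ∀ j ≤ k, (M ^ j) *ᵥ v ∈ krylovLT M v k := fun j hj =>
    hj.lt_or_eq.elim (pow_mulVec_mem_krylovLT M v) (fun h => h ▸ hk)
  have hinv : ∀ w ∈ krylovLT M v k, M *ᵥ w ∈ krylovLT M v k := by
    refine fun w hw => (map_span_le M.mulVecLin _ (krylovLT M v k)).2 ?_ ⟨w, hw, rfl⟩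
    rintro _ ⟨j, rfl⟩
    rw [mulVecLin_apply, mulVec_mulVec, ← pow_succ']
    exact hle _ j.2
  have hall : ∀ j, (M ^ j) *ᵥ v ∈ krylovLT M v k := by
    intro j
    induction j with
    | zero => exact hle 0 k.zero_le
    | succ j ih => rw [pow_succ', ← mulVec_mulVec]; exact hinv _ ih
  exact le_antisymm (span_le.2 <| Set.range_subset_iff.2 hall) (krylovLT_le_krylov M v k)

end Krylov

section KrylovField

variable {K n : Type*} [Field K] [Fintype n] [DecidableEq n] (M : Matrix n n K) (v : n → K)

lemma linearIndependent_pow_mulVec_of_forall_notMem {k : ℕ}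
    (h : ∀ j < k, (M ^ j) *ᵥ v ∉ krylovLT M v j) :
    LinearIndependent K fun j : Fin k => (M ^ (j : ℕ)) *ᵥ v := by
  induction k with
  | zero => exact linearIndependent_empty_type
  | succ k ih =>
    have hsnoc : (fun j : Fin (k + 1) => (M ^ (j : ℕ)) *ᵥ v) =
        Fin.snoc (fun j : Fin k => (M ^ (j : ℕ)) *ᵥ v) ((M ^ k) *ᵥ v) := by
      funext j
      refine Fin.lastCases ?_ (fun i => ?_) j <;> simp
    rw [hsnoc, linearIndependent_finSnoc]
    exact ⟨ih fun j hj => h j (by omega), h k k.lt_succ_self⟩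

theorem krylovLT_finrank_eq_krylov : krylovLT M v (finrank K (krylov M v)) = krylov M v := by
  set d := finrank K (krylov M v)
  by_contra hne
  have hnot : ∀ j < d + 1, (M ^ j) *ᵥ v ∉ krylovLT M v j := by
    intro j hj hmem
    refine hne (le_antisymm (krylovLT_le_krylov M v d) ?_)
    rw [krylov_eq_krylovLT_of_mem M v hmem]
    exact krylovLT_mono M v (by omega)
  have hle := Submodule.finrank_mono (krylovLT_le_krylov M v (d + 1))
  rw [krylovLT, finrank_span_eq_card (linearIndependent_pow_mulVec_of_forall_notMem M v hnot),
    Fintype.card_fin] at hle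
  omega

theorem linearIndependent_pow_mulVec_finrank :
    LinearIndependent K fun j : Fin (finrank K (krylov M v)) => (M ^ (j : ℕ)) *ᵥ v := by
  rw [linearIndependent_iff_card_eq_finrank_span, Fintype.card_fin]
  change _ = finrank K (krylovLT M v _)
  rw [krylovLT_finrank_eq_krylov]

end KrylovField

section EigenvaluesOn

variable {K m n : Type*} [Field K] [Fintype m] [DecidableEq m] [Fintype n]

def eigenvaluesOn (M : Matrix n n K) (W : Submodule K (n → K)) : Set K :=
  {x | ∃ w ∈ W, w ≠ 0 ∧ M *ᵥ w = x • w}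

lemma mem_spectrum_iff_exists_mulVec_eq_smul (A : Matrix m m K) (x : K) :
    x ∈ spectrum K A ↔ ∃ v ≠ 0, A *ᵥ v = x • v := by
  rw [← spectrum_toLin', ← Module.End.hasEigenvalue_iff_mem_spectrum,
    Module.End.hasEigenvalue_iff, Submodule.ne_bot_iff]
  simp [toLin'_apply, and_comm]

theorem spectrum_mul_mul_eq_eigenvaluesOn {B : Matrix m n K} {A : Matrix n m K}
    (M : Matrix n n K) (hBA : B * A = 1)
    (hM : ∀ w ∈ LinearMap.range A.mulVecLin, M *ᵥ w ∈ LinearMap.range A.mulVecLin) :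
    spectrum K (B * M * A) = eigenvaluesOn M (LinearMap.range A.mulVecLin) := by
  have hBA_apply : ∀ v, B *ᵥ (A *ᵥ v) = v := fun v => by rw [mulVec_mulVec, hBA, one_mulVec]
  have hcomp : ∀ v, (B * M * A) *ᵥ v = B *ᵥ (M *ᵥ (A *ᵥ v)) := fun v => by
    simp only [mulVec_mulVec, Matrix.mul_assoc]
  ext x
  rw [mem_spectrum_iff_exists_mulVec_eq_smul]
  constructor
  · rintro ⟨v, hv0, hv⟩
    obtain ⟨z, hz⟩ := hM _ ⟨v, rfl⟩
    simp only [mulVecLin_apply] at hz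
    have hzv : z = x • v := by rw [← hv, hcomp, ← hz, hBA_apply]
    refine ⟨A *ᵥ v, ⟨v, rfl⟩, fun h => hv0 ?_, ?_⟩
    · rw [← hBA_apply v, h, mulVec_zero]
    · rw [← hz, hzv, mulVec_smul]
  · rintro ⟨_, ⟨v, rfl⟩, hw0, hw⟩
    simp only [mulVecLin_apply] at hw0 hw
    refine ⟨v, fun h => hw0 (by rw [h, mulVec_zero]), ?_⟩
    rw [hcomp, hw, mulVec_smul, hBA_apply]

end EigenvaluesOn

section DiagonalKrylov

variable {K n : Type*} [Field K] [Fintype n] [DecidableEq n] {d c : n → K}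

lemma aeval_diagonal_mulVec (p : K[X]) :
    aeval (diagonal d) p *ᵥ c = fun i => p.eval (d i) * c i := by
  rw [show diagonal d = diagonalAlgHom K d from rfl, aeval_algHom_apply]
  ext i
  simp [mulVec_diagonal]

lemma apply_eq_zero_of_mem_krylov_diagonal {u : n → K} (hu : u ∈ krylov (diagonal d) c) {i : n}
    (hci : c i = 0) : u i = 0 := by
  suffices krylov (diagonal d) c ≤ LinearMap.ker (LinearMap.proj i) from this hu
  refine span_le.2 ?_
  rintro _ ⟨j, rfl⟩
  simp [diagonal_pow, mulVec_diagonal, hci]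

end DiagonalKrylov

section Diagonal

variable {K n : Type*} [Field K] [DecidableEq K] [Fintype n] (d c : n → K)

def eigenSupport : Finset K := (Finset.univ.filter fun i => c i ≠ 0).image d

def eigenComponent (l : K) : n → K := fun i => if d i = l then c i else 0

variable {d c}

lemma mem_eigenSupport {l : K} : l ∈ eigenSupport d c ↔ ∃ i, c i ≠ 0 ∧ d i = l := by
  simp [eigenSupport]

lemma eigenComponent_ne_zero {l : K} (hl : l ∈ eigenSupport d c) :
    eigenComponent d c l ≠ 0 := by
  obtain ⟨i, hci, rfl⟩ := mem_eigenSupport.1 hl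
  exact Function.ne_iff.2 ⟨i, by simpa [eigenComponent] using hci⟩

variable [DecidableEq n]

lemma diagonal_mulVec_eigenComponent (l : K) :
    diagonal d *ᵥ eigenComponent d c l = l • eigenComponent d c l := by
  ext i
  by_cases h : d i = l <;> simp [mulVec_diagonal, eigenComponent, h]

lemma diagonal_pow_mulVec_eq_sum (j : ℕ) :
    (diagonal d ^ j) *ᵥ c = ∑ l ∈ eigenSupport d c, l ^ j • eigenComponent d c l := by
  ext i
  by_cases hci : c i = 0
  · simp [diagonal_pow, mulVec_diagonal, eigenComponent, hci]
  · have hi : d i ∈ eigenSupport d c := mem_eigenSupport.2 ⟨i, hci, rfl⟩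
    simp [diagonal_pow, mulVec_diagonal, eigenComponent, Finset.sum_apply, hi]

/-- The Lagrange basis polynomial of `l` on the nodes `eigenSupport d c` cuts `c` down to its
`l`-component. -/
lemma eigenComponent_mem_krylov {l : K} (hl : l ∈ eigenSupport d c) :
    eigenComponent d c l ∈ krylov (diagonal d) c := by
  convert aeval_mulVec_mem_krylov (diagonal d) c (Lagrange.basis (eigenSupport d c) id l)
  rw [aeval_diagonal_mulVec]
  ext i
  by_cases hci : c i = 0
  · simp [eigenComponent, hci]
  have hi : d i ∈ eigenSupport d c := mem_eigenSupport.2 ⟨i, hci, rfl⟩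
  by_cases h : d i = l
  · subst h
    have h1 : (Lagrange.basis (eigenSupport d c) id (d i)).eval (d i) = 1 :=
      Lagrange.eval_basis_self (Set.injOn_id _) hl
    simp [eigenComponent, h1]
  · have h0 : (Lagrange.basis (eigenSupport d c) id l).eval (d i) = 0 :=
      Lagrange.eval_basis_of_ne (v := id) (Ne.symm h) hi
    simp [eigenComponent, h, h0]

lemma linearIndependent_eigenComponent :
    LinearIndependent K fun l : eigenSupport d c => eigenComponent d c l :=
  Module.End.eigenvectors_linearIndependent (toLin' (diagonal d)) (eigenSupport d c)
    (fun l => eigenComponent d c l) fun l =>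
      ⟨by simp [toLin'_apply, diagonal_mulVec_eigenComponent],
        eigenComponent_ne_zero l.2⟩

lemma krylov_diagonal_eq_span :
    krylov (diagonal d) c =
      span K (Set.range fun l : eigenSupport d c => eigenComponent d c l) := by
  refine le_antisymm (span_le.2 ?_) (span_le.2 ?_)
  · rintro _ ⟨j, rfl⟩
    change (diagonal d ^ j) *ᵥ c ∈ _
    rw [diagonal_pow_mulVec_eq_sum]
    exact sum_mem fun l hl => smul_mem _ _ (subset_span ⟨⟨l, hl⟩, rfl⟩)
  · rintro _ ⟨l, rfl⟩
    exact eigenComponent_mem_krylov l.2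

theorem finrank_krylov_diagonal :
    finrank K (krylov (diagonal d) c) = (eigenSupport d c).card := by
  rw [krylov_diagonal_eq_span, finrank_span_eq_card linearIndependent_eigenComponent,
    Fintype.card_coe]

theorem eigenvaluesOn_krylov_diagonal :
    eigenvaluesOn (diagonal d) (krylov (diagonal d) c) = eigenSupport d c := by
  ext x
  constructor
  · rintro ⟨u, hu, hu0, hux⟩
    obtain ⟨i, hui⟩ := Function.ne_iff.1 hu0
    have hdi : d i * u i = x * u i := by simpa [mulVec_diagonal] using congrFun hux i
    exact mem_eigenSupport.2 ⟨i, fun hci => hui (apply_eq_zero_of_mem_krylov_diagonal hu hci),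
      mul_right_cancel₀ hui hdi⟩
  · intro hx
    exact ⟨_, eigenComponent_mem_krylov hx, eigenComponent_ne_zero hx,
      diagonal_mulVec_eigenComponent x⟩

end Diagonal

end Matrix

section GramSchmidt

variable {n : ℕ} {M : Matrix (Fin (n + 1)) (Fin (n + 1)) ℂ} {m : ℕ}
  {A : Matrix (Fin (n + 1)) (Fin m) ℂ}

lemma orthonormal_krylovGS (hm : m = finrank ℂ (krylov M (Pi.single 0 1))) :
    Orthonormal ℂ (krylovGS M m) := by
  subst hm
  exact InnerProductSpace.gramSchmidtNormed_orthonormal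
    ((linearIndependent_pow_mulVec_finrank M _).map' (WithLp.linearEquiv 2 ℂ _).symm.toLinearMap
      (WithLp.linearEquiv 2 ℂ _).symm.ker)

lemma conjTranspose_mul_self_eq_one_of_krylovGS (hm : m = finrank ℂ (krylov M (Pi.single 0 1)))
    (hA : ∀ i j, A i j = (WithLp.equiv 2 (Fin (n + 1) → ℂ)) (krylovGS M m j) i) :
    Aᴴ * A = 1 := by
  have hgram : Aᴴ * A = gram ℂ (krylovGS M m) := by
    rw [gram_eq_conjTranspose_mul (EuclideanSpace.basisFun _ ℂ)]
    congr <;> ext i j <;> simp [hA]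
  rw [hgram, gram_eq_one_iff_orthonormal]
  exact orthonormal_krylovGS hm

lemma range_mulVecLin_eq_krylov_of_krylovGS (hm : m = finrank ℂ (krylov M (Pi.single 0 1)))
    (hA : ∀ i j, A i j = (WithLp.equiv 2 (Fin (n + 1) → ℂ)) (krylovGS M m j) i) :
    LinearMap.range A.mulVecLin = krylov M (Pi.single 0 1) := by
  have hcol : A.col = WithLp.linearEquiv 2 ℂ (Fin (n + 1) → ℂ) ∘ krylovGS M m := by
    ext j i
    simp [hA]
  have hGS : krylovGS M m = InnerProductSpace.gramSchmidtNormed ℂ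
      (fun j : Fin m => (WithLp.linearEquiv 2 ℂ (Fin (n + 1) → ℂ)).symm
        ((M ^ (j : ℕ)) *ᵥ Pi.single 0 1)) := rfl
  subst hm
  rw [range_mulVecLin, hcol, Set.range_comp, ← LinearEquiv.coe_coe, ← map_span, hGS,
    InnerProductSpace.span_gramSchmidtNormed_range, InnerProductSpace.span_gramSchmidt, map_span,
    ← Set.range_comp]
  exact krylovLT_finrank_eq_krylov M _

end GramSchmidt

theorem stmt8_general {n : ℕ} (M : Matrix (Fin (n + 1)) (Fin (n + 1)) ℂ)
    (g : Matrix (Fin (n + 1)) (Fin (n + 1)) ℂ)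
    (hg : g ∈ Matrix.unitaryGroup (Fin (n + 1)) ℂ)
    (ν : Fin (n + 1) → ℝ)
    (hspec : M = g * Matrix.diagonal (fun i => (ν i : ℂ)) * g⁻¹)
    (m : ℕ)
    (hm : m = Module.finrank ℂ
      (Submodule.span ℂ (Set.range fun j : ℕ => (M ^ j).mulVec (Pi.single 0 1))))
    (A : Matrix (Fin (n + 1)) (Fin m) ℂ)
    (hA : ∀ i j, A i j = (WithLp.equiv 2 (Fin (n + 1) → ℂ)) (krylovGS M m j) i) :
    spectrum ℂ (Aᴴ * M * A) = {x : ℂ | ∃ i : Fin (n + 1), g 0 i ≠ 0 ∧ x = (ν i : ℂ)} ∧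
    (spectrum ℂ (Aᴴ * M * A)).ncard = m := by
  set D := diagonal fun i => (ν i : ℂ)
  set c := g⁻¹ *ᵥ Pi.single 0 1
  have hg_inv : g⁻¹ = star g := inv_eq_left_inv hg.1
  have hmul_inv : g * g⁻¹ = 1 := hg_inv ▸ hg.2
  have hDM : g⁻¹ * M = D * g⁻¹ := by
    rw [hspec, ← Matrix.mul_assoc, ← Matrix.mul_assoc, hg_inv, hg.1, Matrix.one_mul]
  have hrange : LinearMap.range (g⁻¹ * A).mulVecLin = krylov D c := by
    rw [mulVecLin_mul, LinearMap.range_comp, range_mulVecLin_eq_krylov_of_krylovGS hm hA,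
      map_krylov_of_mul_eq_mul M _ hDM]
  have hcompress : Aᴴ * M * A = Aᴴ * g * D * (g⁻¹ * A) := by
    rw [hspec]; simp only [Matrix.mul_assoc]
  have hisometry : Aᴴ * g * (g⁻¹ * A) = 1 := by
    rw [Matrix.mul_assoc, ← Matrix.mul_assoc g, hmul_inv, Matrix.one_mul,
      conjTranspose_mul_self_eq_one_of_krylovGS hm hA]
  have hspectrum : spectrum ℂ (Aᴴ * M * A) = eigenSupport (fun i => (ν i : ℂ)) c := by
    rw [hcompress, spectrum_mul_mul_eq_eigenvaluesOn D hisometry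
      (hrange ▸ fun _ => mulVec_mem_krylov D c), hrange, eigenvaluesOn_krylov_diagonal]
  have hinj : Function.Injective (g⁻¹).mulVecLin := fun x y h => by
    simpa [mulVec_mulVec, hmul_inv] using congrArg (g *ᵥ ·) h
  have hcard : m = (eigenSupport (fun i => (ν i : ℂ)) c).card := by
    rw [← finrank_krylov_diagonal, ← map_krylov_of_mul_eq_mul M _ hDM, hm]
    exact (Submodule.equivMapOfInjective _ hinj _).finrank_eq
  have hc : ∀ i, c i = star (g 0 i) := fun i => by simp [c, hg_inv, mulVec_single]
  refine ⟨hspectrum.trans ?_, by rw [hspectrum, Set.ncard_coe_finset, hcard]⟩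
  ext x
  simp [mem_eigenSupport, hc, eq_comm (a := x)]

/-- for a Hermitian matrix `M = g Diag(ν) g⁻¹` (`ν` weakly decreasing, `g`
unitary) with tridiagonalization `M_T = A* M A` via the cyclic subspace of `e₁`, the
eigenvalues of `M_T` are distinct (there are `m` of them, where `M_T` is `m × m`), and the
set of eigenvalues of `M_T` is `{ν_i : g_{1,i} ≠ 0}`. -/
theorem stmt8 {n : ℕ} (M : Matrix (Fin (n + 1)) (Fin (n + 1)) ℂ) (hM : M.IsHermitian)
    (g : Matrix (Fin (n + 1)) (Fin (n + 1)) ℂ)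
    (hg : g ∈ Matrix.unitaryGroup (Fin (n + 1)) ℂ)
    (ν : Fin (n + 1) → ℝ) (hν : Antitone ν)
    (hspec : M = g * Matrix.diagonal (fun i => (ν i : ℂ)) * g⁻¹)
    (m : ℕ)
    (hm : m = Module.finrank ℂ
      (Submodule.span ℂ (Set.range fun j : ℕ => (M ^ j).mulVec (Pi.single 0 1))))
    (A : Matrix (Fin (n + 1)) (Fin m) ℂ)
    (hA : ∀ i j, A i j = (WithLp.equiv 2 (Fin (n + 1) → ℂ)) (krylovGS M m j) i) :
    spectrum ℂ (Aᴴ * M * A) = {x : ℂ | ∃ i : Fin (n + 1), g 0 i ≠ 0 ∧ x = (ν i : ℂ)} ∧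
    (spectrum ℂ (Aᴴ * M * A)).ncard = m :=
  stmt8_general M g hg ν hspec m hm A hA
end
end

section
/- Let P ∈ gl_n(ℂ) be the orthogonal projection onto a k-dimensional subspace V ⊆ ℂⁿ represented by an n×k matrix A of full rank (so P = A(A*A)⁻¹A*). Then the i-th diagonal entry of P equals (Σ_{I∋i} |Δ_I(A)|²) / (Σ_I |Δ_I(A)|²), where the sums run over k-subsets I of [n], i.e., diag(P) equals the Grassmannian moment map image μ_{k,n}(V). -/
/-!
Scaling the `i`-th row of `A` by `√2` turns the Gram matrix `G = AᴴA` into the rank-one update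
`G + aᵢᴴaᵢ`, whose determinant is `det G · (1 + aᵢG⁻¹aᵢᴴ) = det G · (1 + Pᵢᵢ)` by the matrix
determinant lemma. On the other hand, by Cauchy–Binet the determinant of a Gram matrix is the sum
of the squared moduli of the maximal minors, and the scaling doubles exactly the minors `Δ_I` with
`i ∈ I`. Hence `(Σ_I |Δ_I|²)(1 + Pᵢᵢ) = Σ_I |Δ_I|² + Σ_{I ∋ i} |Δ_I|²`.
-/

open Matrix BigOperators

noncomputable section

/-- The Plücker coordinate `Δ_S(A)` of the column span of an `n × k` matrix `A`:
the `k × k` minor of `A` with rows the elements of `S` (in increasing order). -/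
def pluckerCoord {n k : ℕ} (A : Matrix (Fin n) (Fin k) ℂ)
    (S : {S : Finset (Fin n) // S.card = k}) : ℂ :=
  (A.submatrix (fun a => S.1.orderEmbOfFin S.2 a) id).det

open Set.powersetCard exteriorPower in
theorem Matrix.det_mul_eq_sum_det_submatrix {R ι : Type*} [CommRing R] [Fintype ι]
    [LinearOrder ι] {k : ℕ} (M : Matrix (Fin k) ι R) (N : Matrix ι (Fin k) R) :
    det (M * N) = ∑ s : Set.powersetCard ι k,
      det (M.submatrix id (ofFinEmbEquiv.symm s)) *
        det (N.submatrix (ofFinEmbEquiv.symm s) id) := by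
  let b := Pi.basisFun R ι
  let f : Fin k → Module.Dual R (ι → R) := fun a => (LinearMap.proj a).comp M.mulVecLin
  -- Pair the wedge of the rows of `M` (as linear forms) with the wedge of the columns of `N`,
  -- expanded in the basis of `⋀^k (ι → R)` induced by `b`: its coordinates are the minors of `N`.
  have key := congrArg (pairingDual R (ι → R) k (ιMulti R k f))
    ((b.exteriorPower k).sum_repr (ιMulti R k N.col))
  rw [pairingDual_ιMulti_ιMulti, map_sum] at key
  rw [← det_transpose]
  convert key.symm using 2 with s
  · ext a c
    simp [f, mul_apply, mulVec, dotProduct]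
  · rw [map_smul, basis_repr_apply, ιMultiDual_apply_ιMulti, basis_apply, ιMulti_family,
      pairingDual_ιMulti_ιMulti, smul_eq_mul, mul_comm, ← det_transpose (M.submatrix _ _),
      ← det_transpose (N.submatrix _ _)]
    congr 2
    ext a c
    simp [f, b]

theorem Matrix.isUnit_det_of_rank_eq_card {K m : Type*} [Field K] [Fintype m] [DecidableEq m]
    {G : Matrix m m K} (h : G.rank = Fintype.card m) : IsUnit G.det := by
  rw [← isUnit_iff_isUnit_det, ← linearIndependent_cols_iff_isUnit,
    linearIndependent_iff_card_eq_finrank_span, Set.finrank, ← rank_eq_finrank_span_cols, h]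

open scoped ComplexOrder in
theorem Matrix.isUnit_det_conjTranspose_mul_self {K m n : Type*} [RCLike K] [Fintype m]
    [Fintype n] [DecidableEq n] {A : Matrix m n K} (hA : A.rank = Fintype.card n) :
    IsUnit (Aᴴ * A).det :=
  isUnit_det_of_rank_eq_card (by rw [rank_conjTranspose_mul_self, hA])

theorem Matrix.det_submatrix_updateRow_smul {m n R : Type*} [CommRing R] [DecidableEq m]
    [Fintype n] [DecidableEq n] (A : Matrix m n R) {f : n → m} (hf : Function.Injective f)
    (i : m) (c : R) :
    det ((A.updateRow i (c • A i)).submatrix f id) =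
      (if i ∈ Set.range f then c else 1) * det (A.submatrix f id) := by
  by_cases hi : i ∈ Set.range f
  · obtain ⟨j, rfl⟩ := hi
    have : (A.updateRow (f j) (c • A (f j))).submatrix f id =
        (A.submatrix f id).updateRow j (c • (A.submatrix f id) j) := by
      ext a b
      rcases eq_or_ne a j with rfl | hne
      · simp
      · simp [hne, hf.ne hne]
    rw [this, det_updateRow_smul, updateRow_eq_self, if_pos ⟨j, rfl⟩]
  · rw [if_neg hi, one_mul]
    congr 1
    ext a b
    simp [updateRow_ne (fun h => hi ⟨a, h⟩)]

theorem Matrix.conjTranspose_mul_self_updateRow_smul {m n R : Type*} [CommRing R] [StarRing R]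
    [Fintype m] [DecidableEq m] (A : Matrix m n R) (i : m) (c : R) :
    (A.updateRow i (c • A i))ᴴ * A.updateRow i (c • A i) =
      Aᴴ * A + (star c * c - 1) • vecMulVec (star (A i)) (A i) := by
  ext a b
  simp only [add_apply, smul_apply, vecMulVec_apply, mul_apply, conjTranspose_apply,
    Pi.star_apply, smul_eq_mul]
  rw [Fintype.sum_eq_add_sum_compl i,
    Fintype.sum_eq_add_sum_compl i (fun j => star (A j a) * A j b),
    Finset.sum_congr rfl fun j hj => by rw [updateRow_ne (by simpa using hj)]]
  simp only [updateRow_self, Pi.smul_apply, smul_eq_mul, star_mul']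
  ring

theorem Matrix.det_conjTranspose_mul_self_add_vecMulVec {m n R : Type*} [CommRing R] [StarRing R]
    [Fintype m] [Fintype n] [DecidableEq n] (A : Matrix m n R) (hA : IsUnit (Aᴴ * A).det) (i : m) :
    det (Aᴴ * A + vecMulVec (star (A i)) (A i)) =
      det (Aᴴ * A) * (1 + (A * (Aᴴ * A)⁻¹ * Aᴴ) i i) := by
  rw [vecMulVec_eq Unit, det_add_replicateCol_mul_replicateRow hA, det_unique (n := Unit)]
  simp [mul_apply]

theorem det_conjTranspose_mul_self_eq_sum_sq_norm_pluckerCoord {n k : ℕ}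
    (A : Matrix (Fin n) (Fin k) ℂ) :
    det (Aᴴ * A) =
      ((∑ S : {S : Finset (Fin n) // S.card = k}, ‖pluckerCoord A S‖ ^ 2 : ℝ) : ℂ) := by
  rw [det_mul_eq_sum_det_submatrix, Complex.ofReal_sum]
  refine Fintype.sum_equiv (Equiv.subtypeEquivRight fun _ => Iff.rfl :
    Set.powersetCard (Fin n) k ≃ {S : Finset (Fin n) // S.card = k}) _ _ fun s => ?_
  rw [← conjTranspose_submatrix, det_conjTranspose]
  push_cast
  exact Complex.conj_mul' _

theorem pluckerCoord_updateRow_smul {n k : ℕ} (A : Matrix (Fin n) (Fin k) ℂ) (i : Fin n) (c : ℂ)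
    (S : {S : Finset (Fin n) // S.card = k}) :
    pluckerCoord (A.updateRow i (c • A i)) S = (if i ∈ S.1 then c else 1) * pluckerCoord A S := by
  simp only [pluckerCoord, det_submatrix_updateRow_smul _ (S.1.orderEmbOfFin S.2).injective,
    Finset.range_orderEmbOfFin, Finset.mem_coe]

theorem sum_sq_norm_pluckerCoord_updateRow_smul {n k : ℕ} (A : Matrix (Fin n) (Fin k) ℂ)
    (i : Fin n) (c : ℂ) :
    ∑ S : {S : Finset (Fin n) // S.card = k}, ‖pluckerCoord (A.updateRow i (c • A i)) S‖ ^ 2 =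
      ∑ S : {S : Finset (Fin n) // S.card = k}, ‖pluckerCoord A S‖ ^ 2 +
        (‖c‖ ^ 2 - 1) * ∑ S : {S : Finset (Fin n) // S.card = k},
          if i ∈ S.1 then ‖pluckerCoord A S‖ ^ 2 else 0 := by
  rw [Finset.mul_sum, ← Finset.sum_add_distrib]
  refine Finset.sum_congr rfl fun S _ => ?_
  rw [pluckerCoord_updateRow_smul, norm_mul, mul_pow]
  split_ifs
  · ring
  · simp

/-- if `P = A(A*A)⁻¹A*` is the orthogonal projection onto the column span of
a full-rank `n × k` matrix `A`, then the `i`-th diagonal entry of `P` equals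
`(Σ_{S ∋ i} |Δ_S(A)|²) / (Σ_S |Δ_S(A)|²)`, i.e., `diag(P) = μ_{k,n}(V)`. -/
theorem stmt13 {n k : ℕ} (A : Matrix (Fin n) (Fin k) ℂ) (hA : A.rank = k)
    (P : Matrix (Fin n) (Fin n) ℂ) (hP : P = A * (Aᴴ * A)⁻¹ * Aᴴ) (i : Fin n) :
    P i i =
      (((∑ S : {S : Finset (Fin n) // S.card = k},
          if i ∈ S.1 then ‖pluckerCoord A S‖ ^ 2 else 0) /
        (∑ S : {S : Finset (Fin n) // S.card = k},
          ‖pluckerCoord A S‖ ^ 2) : ℝ) : ℂ) := by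
  set d := ∑ S : {S : Finset (Fin n) // S.card = k}, ‖pluckerCoord A S‖ ^ 2
  set m := ∑ S : {S : Finset (Fin n) // S.card = k}, if i ∈ S.1 then ‖pluckerCoord A S‖ ^ 2 else 0
  have hG : IsUnit (Aᴴ * A).det := isUnit_det_conjTranspose_mul_self (by rw [hA, Fintype.card_fin])
  have hd : (Aᴴ * A).det = d := det_conjTranspose_mul_self_eq_sum_sq_norm_pluckerCoord A
  set c : ℂ := ((√2 : ℝ) : ℂ)
  have hc : ‖c‖ ^ 2 = 2 := by simp [c]
  have hc' : star c * c - 1 = 1 := by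
    rw [← starRingEnd_apply, Complex.conj_mul', ← Complex.ofReal_pow, hc]
    norm_num
  have key : (d : ℂ) * (1 + P i i) = ((d + m : ℝ) : ℂ) := by
    let B := A.updateRow i (c • A i)
    calc (d : ℂ) * (1 + P i i) = det (Bᴴ * B) := by
          rw [conjTranspose_mul_self_updateRow_smul, hc', one_smul,
            det_conjTranspose_mul_self_add_vecMulVec A hG, hd, hP]
      _ = ((d + m : ℝ) : ℂ) := by
          rw [det_conjTranspose_mul_self_eq_sum_sq_norm_pluckerCoord,
            sum_sq_norm_pluckerCoord_updateRow_smul, hc]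
          congr 1
          ring
  have hd0 : (d : ℂ) ≠ 0 := hd ▸ hG.ne_zero
  rw [Complex.ofReal_div, eq_div_iff hd0]
  push_cast at key
  linear_combination key
end
end

section
/- Let λ₁ > ... > λₙ be real, x ∈ ℝⁿ with all x_i > 0, and let g be the rescaled Vandermonde matrix g_{i,j} = λ_i^{j-1} x_i. Then g is invertible and all left-justified minors Δ_I(g) for nonempty I ⊆ [n] are positive if the elements of I are listed in decreasing order; in particular, the complete flag represented by g after reversing the row order is totally positive. -/
open Matrix BigOperators

noncomputable section

lemma det_scaled_vdm {k : ℕ} (v c : Fin k → ℝ) :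
    (Matrix.of fun i j : Fin k => v i ^ (j : ℕ) * c i).det =
      (∏ i, c i) * ∏ i : Fin k, ∏ j ∈ Finset.Ioi i, (v j - v i) := by
  have h : (Matrix.of fun i j : Fin k => v i ^ (j : ℕ) * c i) =
      Matrix.diagonal c * Matrix.vandermonde v := by
    ext i j
    simp [Matrix.diagonal_mul, Matrix.vandermonde, mul_comm]
  rw [h, Matrix.det_mul, Matrix.det_diagonal, Matrix.det_vandermonde]

lemma det_scaled_vdm_pos {k : ℕ} (v c : Fin k → ℝ) (hv : StrictMono v)
    (hc : ∀ i, 0 < c i) :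
    0 < (Matrix.of fun i j : Fin k => v i ^ (j : ℕ) * c i).det := by
  rw [det_scaled_vdm]
  apply mul_pos (Finset.prod_pos fun i _ => hc i)
  apply Finset.prod_pos
  intro i _
  apply Finset.prod_pos
  intro j hj
  exact sub_pos.2 (hv (Finset.mem_Ioi.1 hj))

/-- for `λ₁ > ... > λₙ` real and `x` a positive vector, the rescaled
Vandermonde matrix `g_{i,j} = λ_i^{j-1} x_i` is invertible, all its left-justified minors
with rows listed in decreasing order are positive, and the matrix obtained by reversing
the rows of `g` has all its left-justified minors (with rows in increasing order) positive,
i.e., it represents a totally positive complete flag. -/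
theorem stmt16 {n : ℕ} (lam x : Fin n → ℝ) (hlam : StrictAnti lam)
    (hx : ∀ i, 0 < x i)
    (g : Matrix (Fin n) (Fin n) ℝ)
    (hg : ∀ i j, g i j = lam i ^ (j : ℕ) * x i) :
    IsUnit g.det ∧
    (∀ (k : ℕ) (hk1 : 1 ≤ k) (hk : k ≤ n) (r : Fin k → Fin n), StrictAnti r →
      0 < (g.submatrix r (Fin.castLE hk)).det) ∧
    (∀ (k : ℕ) (hk1 : 1 ≤ k) (hk : k ≤ n) (r : Fin k → Fin n), StrictMono r →
      0 < ((g.submatrix (fun i : Fin n => Fin.rev i) id).submatrix r (Fin.castLE hk)).det) := by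
  have hrev : StrictAnti (fun i : Fin n => Fin.rev i) := fun a b h => Fin.rev_lt_rev.2 h
  refine ⟨?_, ?_, ?_⟩
  · have hgeq : g = Matrix.of fun i j : Fin n => lam i ^ (j : ℕ) * x i := by
      ext i j; exact hg i j
    rw [hgeq, isUnit_iff_ne_zero, det_scaled_vdm]
    apply mul_ne_zero
    · exact (Finset.prod_pos fun i _ => hx i).ne'
    · apply Finset.prod_ne_zero_iff.2
      intro i _
      apply Finset.prod_ne_zero_iff.2
      intro j hj
      exact sub_ne_zero.2 (ne_of_lt (hlam (Finset.mem_Ioi.1 hj)))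
  · intro k hk1 hk r hr
    have : g.submatrix r (Fin.castLE hk) =
        Matrix.of fun i j : Fin k => (lam ∘ r) i ^ (j : ℕ) * (x ∘ r) i := by
      ext i j
      simp [Matrix.submatrix_apply, hg]
    rw [this]
    exact det_scaled_vdm_pos _ _ ((fun a b h => hlam (hr h))) (fun i => hx (r i))
  · intro k hk1 hk r hr
    have : (g.submatrix (fun i : Fin n => Fin.rev i) id).submatrix r (Fin.castLE hk) =
        Matrix.of fun i j : Fin k => (lam ∘ Fin.rev ∘ r) i ^ (j : ℕ) * (x ∘ Fin.rev ∘ r) i := by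
      ext i j
      simp [Matrix.submatrix_apply, hg]
    rw [this]
    exact det_scaled_vdm_pos _ _ (fun a b h => hlam (hrev (hr h)))
      (fun i => hx (Fin.rev (r i)))
end
end

section
/- Let M be an n×n Hermitian matrix, and let M(t) = K(exp(tM))⁻¹ · M · K(exp(tM)), where K(g) denotes the unitary Q-factor in the QR-decomposition of g (with positive diagonal R). Then M(t) solves the symmetric Toda lattice equation dM/dt = [M, k(M)], where k(M) is the skew-Hermitian matrix such that M - k(M) is upper triangular with real diagonal (i.e., k(M) has entries k(M)_{ij} = M_{ij} for i > j, -conj(M_{ji}) for i < j, and purely imaginary part of M_{ii} on the diagonal; for real symmetric M, k(M) is the strictly-lower-part minus its transpose). -/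
/-!
Differentiating `exp(tM) = Q R` gives `M Q R = Q' R + Q R'`, i.e. `Qᴴ M Q = Qᴴ Q' + R' R⁻¹`.
Since `Q` stays unitary, `Qᴴ Q'` is skew-Hermitian; since `R` stays upper triangular with positive
diagonal, `R' R⁻¹` is upper triangular with real diagonal. This splitting is unique, so
`k(Qᴴ M Q) = Qᴴ Q'`, and differentiating `Qᴴ M Q` using `Q' = Q (Qᴴ Q')` gives the Toda equation.
That `Q` and `R` are differentiable at all follows from the Cholesky recursion for
`Rᴴ R = exp(tM)ᴴ exp(tM)`.
-/

open Matrix BigOperators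

noncomputable section

/-- The skew-Hermitian projection `k(M)`: the unique skew-Hermitian matrix such that
`M - k(M)` is upper triangular with real diagonal entries. -/
def kProj {n : ℕ} (M : Matrix (Fin n) (Fin n) ℂ) : Matrix (Fin n) (Fin n) ℂ :=
  Matrix.of fun i j =>
    if j < i then M i j
    else if i < j then -(starRingEnd ℂ) (M j i)
    else Complex.I * ((M i i).im : ℂ)

theorem Matrix.BlockTriangular.mul_apply_self {m α : Type*} [Fintype m] [LinearOrder m]
    [NonUnitalNonAssocSemiring α] {A B : Matrix m m α} (hA : A.BlockTriangular id)
    (hB : B.BlockTriangular id) (i : m) : (A * B) i i = A i i * B i i := by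
  rw [mul_apply, Finset.sum_eq_single i]
  · intro k _ hki
    rcases hki.lt_or_gt with hlt | hgt
    · rw [hA hlt, zero_mul]
    · rw [hB hgt, mul_zero]
  · simp

theorem Matrix.BlockTriangular.conjTranspose_mul_self_apply {m α : Type*} [Fintype m]
    [LinearOrder m] [LocallyFiniteOrderBot m] [NonUnitalNonAssocSemiring α] [StarRing α]
    {R : Matrix m m α} (hR : R.BlockTriangular id) (i j : m) :
    (Rᴴ * R) i j = ∑ k ∈ Finset.Iio i, star (R k i) * R k j + star (R i i) * R i j := by
  rw [mul_apply, ← Finset.sum_subset (Finset.subset_univ (Finset.Iic i)),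
    ← Finset.Iio_insert, Finset.sum_insert Finset.notMem_Iio_self, add_comm]
  · rfl
  · intro k _ hk
    rw [conjTranspose_apply, hR (Finset.mem_Iic.not.1 hk |> lt_of_not_ge), star_zero, zero_mul]

theorem Complex.ne_zero_of_exists_pos_eq_ofReal {z : ℂ} (h : ∃ r : ℝ, 0 < r ∧ z = r) :
    z ≠ 0 := by
  obtain ⟨r, hr0, rfl⟩ := h
  exact Complex.ofReal_ne_zero.2 hr0.ne'

/-- The Lie algebra of the group of upper triangular matrices with positive diagonal;
`kProj` is the projection of `𝔤𝔩ₙ(ℂ)` onto `𝔲(n)` along it. -/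
def IsUpperTriangularRealDiag {m : Type*} [LinearOrder m] (U : Matrix m m ℂ) : Prop :=
  U.BlockTriangular id ∧ ∀ i, (U i i).im = 0

theorem IsUpperTriangularRealDiag.of_posDiag {m : Type*} [LinearOrder m] {U : Matrix m m ℂ}
    (hU : U.BlockTriangular id) (hdiag : ∀ i, ∃ r : ℝ, 0 < r ∧ U i i = r) :
    IsUpperTriangularRealDiag U :=
  ⟨hU, fun i => by obtain ⟨r, -, hr⟩ := hdiag i; rw [hr, Complex.ofReal_im]⟩

namespace IsUpperTriangularRealDiag

variable {m : Type*} [Fintype m] [LinearOrder m] {U V : Matrix m m ℂ}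

theorem mul (hU : IsUpperTriangularRealDiag U) (hV : IsUpperTriangularRealDiag V) :
    IsUpperTriangularRealDiag (U * V) :=
  ⟨hU.1.mul hV.1, fun i => by
    rw [hU.1.mul_apply_self hV.1, Complex.mul_im, hU.2, hV.2, zero_mul, mul_zero, add_zero]⟩

theorem inv (hU : IsUpperTriangularRealDiag U) (hdet : IsUnit U.det) :
    IsUpperTriangularRealDiag U⁻¹ := by
  let _ := U.invertibleOfIsUnitDet hdet
  have htri : U⁻¹.BlockTriangular id := blockTriangular_inv_of_blockTriangular hU.1
  refine ⟨htri, fun i => ?_⟩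
  have h : U i i * U⁻¹ i i = 1 := by
    rw [← hU.1.mul_apply_self htri, mul_nonsing_inv U hdet, one_apply_eq]
  rw [eq_inv_of_mul_eq_one_right h, Complex.inv_im, hU.2, neg_zero, zero_div]

end IsUpperTriangularRealDiag

theorem kProj_add_of_conjTranspose_eq_neg {n : ℕ} {S U : Matrix (Fin n) (Fin n) ℂ}
    (hS : Sᴴ = -S) (hU : IsUpperTriangularRealDiag U) : kProj (S + U) = S := by
  have hS' : ∀ a b, starRingEnd ℂ (S b a) = -S a b := fun a b => by
    simpa [Complex.star_def] using congr_fun (congr_fun hS a) b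
  ext a b
  simp only [kProj, of_apply, Matrix.add_apply]
  rcases lt_trichotomy a b with h | rfl | h
  · rw [if_neg h.not_gt, if_pos h, hU.1 h, add_zero, hS', neg_neg]
  · have hre : (S a a).re = 0 := by
      have := congr_arg Complex.re (hS' a a)
      simp only [Complex.conj_re, Complex.neg_re] at this
      linarith
    apply Complex.ext <;> simp [hU.2 a, hre]
  · rw [if_pos h, hU.1 h, add_zero]

/-- Differentiability of the Cholesky factor, by induction on the rows: row `i` of `R` is
determined by `A` and the rows above it through `Rᴴ R = A`. -/
theorem differentiable_apply_of_conjTranspose_mul_self {n : ℕ}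
    {A R : ℝ → Matrix (Fin n) (Fin n) ℂ} (hA : ∀ i j, Differentiable ℝ fun s => A s i j)
    (hR : ∀ s, (R s).BlockTriangular id) (hRdiag : ∀ s i, ∃ r : ℝ, 0 < r ∧ R s i i = r)
    (hRA : ∀ s, (R s)ᴴ * R s = A s) (i j : Fin n) :
    Differentiable ℝ fun s => R s i j := by
  induction i using WellFoundedLT.induction generalizing j with
  | _ i IH =>
  set c : Fin n → ℝ → ℂ := fun j s => A s i j - ∑ k ∈ Finset.Iio i, star (R s k i) * R s k j
  have hc : ∀ j, Differentiable ℝ (c j) := fun j =>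
    (hA i j).sub <| Differentiable.fun_sum fun k hk =>
      ((IH k (Finset.mem_Iio.1 hk) i).star).mul (IH k (Finset.mem_Iio.1 hk) j)
  have hcR : ∀ j s, c j s = R s i i * R s i j := fun j s => by
    obtain ⟨r, -, hr⟩ := hRdiag s i
    simp only [c, ← hRA s, (hR s).conjTranspose_mul_self_apply, hr, Complex.star_def,
      Complex.conj_ofReal, add_sub_cancel_left]
  have hpos : ∀ s, 0 < (c i s).re := fun s => by
    obtain ⟨r, hr0, hr⟩ := hRdiag s i
    rw [hcR, hr, ← Complex.ofReal_mul, Complex.ofReal_re]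
    positivity
  have hdiag : Differentiable ℝ fun s => R s i i := by
    have : ∀ s, R s i i = (√(c i s).re : ℂ) := fun s => by
      obtain ⟨r, hr0, hr⟩ := hRdiag s i
      rw [hcR, hr, ← Complex.ofReal_mul, Complex.ofReal_re, Real.sqrt_mul_self hr0.le]
    simp only [this]
    have hre : Differentiable ℝ fun s => (c i s).re := by fun_prop
    exact Complex.ofRealCLM.differentiable.comp (hre.sqrt fun s => (hpos s).ne')
  have hne : ∀ s, R s i i ≠ 0 := fun s => Complex.ne_zero_of_exists_pos_eq_ofReal (hRdiag s i)
  have hRij : (fun s => R s i j) = fun s => c j s / R s i i :=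
    funext fun s => by rw [hcR, mul_div_cancel_left₀ _ (hne s)]
  rw [hRij]
  exact (hc j).div hdiag hne

theorem Matrix.BlockTriangular.isUnit_det {m K : Type*} [Fintype m] [LinearOrder m] [Field K]
    {R : Matrix m m K} (hR : R.BlockTriangular id) (hdiag : ∀ i, R i i ≠ 0) : IsUnit R.det := by
  rw [det_of_isUpperTriangular hR, isUnit_iff_ne_zero, Finset.prod_ne_zero_iff]
  exact fun i _ => hdiag i

theorem mul_mul_eq_add_of_leibniz {α : Type*} [Ring α] {q q' qs r r' ri m : α}
    (hq : qs * q = 1) (hr : r * ri = 1) (h : m * (q * r) = q' * r + q * r') :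
    qs * m * q = qs * q' + r' * ri :=
  calc qs * m * q = qs * m * q * (r * ri) := by rw [hr, mul_one]
  _ = qs * (m * (q * r)) * ri := by noncomm_ring
  _ = qs * q' * (r * ri) + qs * q * (r' * ri) := by rw [h]; noncomm_ring
  _ = qs * q' + r' * ri := by rw [hq, hr, mul_one, one_mul]

section MatrixCalculus

-- Any norm would do: only the product topology and the algebra structure matter.
attribute [local instance] Matrix.linftyOpNormedAddCommGroup Matrix.linftyOpNormedSpace
  Matrix.linftyOpNormedRing Matrix.linftyOpNormedAlgebra

theorem Matrix.hasDerivAt_iff_hasDerivAt_apply {m n : Type*} [Fintype m] [Fintype n]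
    {f : ℝ → Matrix m n ℂ} {F : Matrix m n ℂ} {t : ℝ} :
    HasDerivAt f F t ↔ ∀ i j, HasDerivAt (fun s => f s i j) (F i j) t := by
  let e : Matrix m n ℂ →L[ℝ] (m → n → ℂ) :=
    LinearMap.toContinuousLinearMap (Matrix.ofLinearEquiv ℝ).symm.toLinearMap
  let e' : (m → n → ℂ) →L[ℝ] Matrix m n ℂ :=
    LinearMap.toContinuousLinearMap (Matrix.ofLinearEquiv ℝ).toLinearMap
  have key : HasDerivAt f F t ↔ HasDerivAt (e ∘ f) (e F) t :=
    ⟨fun h => e.hasFDerivAt.comp_hasDerivAt t h, fun h => e'.hasFDerivAt.comp_hasDerivAt t h⟩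
  rw [key, hasDerivAt_pi]
  exact forall_congr' fun i => hasDerivAt_pi

variable {m : Type*} [Fintype m]

theorem Matrix.differentiableAt_of_differentiable_apply {n : Type*} [Fintype n]
    {f : ℝ → Matrix m n ℂ} {t : ℝ} (h : ∀ i j, DifferentiableAt ℝ (fun s => f s i j) t) :
    DifferentiableAt ℝ f t :=
  (Matrix.hasDerivAt_iff_hasDerivAt_apply.2 fun i j => (h i j).hasDerivAt).differentiableAt

theorem HasDerivAt.matrix_conjTranspose {n : Type*} [Fintype n] {f : ℝ → Matrix m n ℂ}
    {F : Matrix m n ℂ} {t : ℝ} (h : HasDerivAt f F t) : HasDerivAt (fun s => (f s)ᴴ) Fᴴ t :=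
  Matrix.hasDerivAt_iff_hasDerivAt_apply.2 fun i j =>
    (Matrix.hasDerivAt_iff_hasDerivAt_apply.1 h j i).star

theorem hasDerivAt_exp_ofReal_smul [DecidableEq m] (M : Matrix m m ℂ) (t : ℝ) :
    HasDerivAt (fun s : ℝ => NormedSpace.exp ((s : ℂ) • M))
      (M * NormedSpace.exp ((t : ℂ) • M)) t := by
  simp only [Complex.coe_smul]
  exact hasDerivAt_exp_smul_const' M t

theorem IsUpperTriangularRealDiag.of_hasDerivAt [LinearOrder m] {U : ℝ → Matrix m m ℂ}
    {U' : Matrix m m ℂ} {t : ℝ} (hU : ∀ s, IsUpperTriangularRealDiag (U s))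
    (h : HasDerivAt U U' t) : IsUpperTriangularRealDiag U' := by
  have he := Matrix.hasDerivAt_iff_hasDerivAt_apply.1 h
  refine ⟨fun a b hab => (he a b).unique ?_, fun a => ?_⟩
  · exact (hasDerivAt_const t 0).congr_of_eventuallyEq
      (Filter.Eventually.of_forall fun s => (hU s).1 hab)
  · refine (Complex.imCLM.hasFDerivAt.comp_hasDerivAt t (he a a)).unique ?_
    exact (hasDerivAt_const t 0).congr_of_eventuallyEq
      (Filter.Eventually.of_forall fun s => (hU s).2 a)

variable [DecidableEq m] {Q : ℝ → Matrix m m ℂ} {Q' : Matrix m m ℂ} {t : ℝ}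

theorem conjTranspose_mul_deriv_of_mem_unitaryGroup (hQ : ∀ s, Q s ∈ unitaryGroup m ℂ)
    (h : HasDerivAt Q Q' t) : ((Q t)ᴴ * Q')ᴴ = -((Q t)ᴴ * Q') := by
  have hconst : HasDerivAt (fun s => (Q s)ᴴ * Q s) 0 t :=
    (hasDerivAt_const t 1).congr_of_eventuallyEq
      (Filter.Eventually.of_forall fun s => mem_unitaryGroup_iff'.1 (hQ s))
  have hsum := (h.matrix_conjTranspose.mul h).unique hconst
  rw [conjTranspose_mul, conjTranspose_conjTranspose]
  exact eq_neg_of_add_eq_zero_left hsum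

theorem hasDerivAt_conjTranspose_mul_mul_of_mem_unitaryGroup (M : Matrix m m ℂ)
    (hQ : ∀ s, Q s ∈ unitaryGroup m ℂ) (h : HasDerivAt Q Q' t) :
    HasDerivAt (fun s => (Q s)ᴴ * M * Q s)
      ((Q t)ᴴ * M * Q t * ((Q t)ᴴ * Q') - (Q t)ᴴ * Q' * ((Q t)ᴴ * M * Q t)) t := by
  have hQQ : Q t * (Q t)ᴴ = 1 := mem_unitaryGroup_iff.1 (hQ t)
  have hskew : Q'ᴴ * Q t = -((Q t)ᴴ * Q') := by
    simpa using conjTranspose_mul_deriv_of_mem_unitaryGroup hQ h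
  have hQ'ct : Q'ᴴ = -((Q t)ᴴ * Q' * (Q t)ᴴ) := by
    rw [← neg_mul, ← hskew, mul_assoc, hQQ, mul_one]
  have hMQ' : (Q t)ᴴ * M * Q t * ((Q t)ᴴ * Q') = (Q t)ᴴ * M * Q' := by
    rw [mul_assoc ((Q t)ᴴ * M), ← mul_assoc (Q t), hQQ, one_mul]
  refine ((h.matrix_conjTranspose.mul_const M).mul h).congr_deriv ?_
  rw [hMQ', hQ'ct]
  noncomm_ring

variable {n : ℕ} {R : ℝ → Matrix (Fin n) (Fin n) ℂ}

theorem differentiableAt_factors_of_QR {E Q : ℝ → Matrix (Fin n) (Fin n) ℂ}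
    (hE : ∀ i j, Differentiable ℝ fun s => E s i j) (hQ : ∀ s, Q s ∈ unitaryGroup (Fin n) ℂ)
    (hR : ∀ s, (R s).BlockTriangular id) (hRdiag : ∀ s i, ∃ r : ℝ, 0 < r ∧ R s i i = r)
    (hQR : ∀ s, E s = Q s * R s) (t : ℝ) :
    DifferentiableAt ℝ Q t ∧ DifferentiableAt ℝ R t := by
  have hRA : ∀ s, (R s)ᴴ * R s = (E s)ᴴ * E s := fun s => by
    have hQQ : (Q s)ᴴ * Q s = 1 := mem_unitaryGroup_iff'.1 (hQ s)
    rw [hQR, conjTranspose_mul, mul_assoc, ← mul_assoc (Q s)ᴴ, hQQ, one_mul]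
  have hA : ∀ i j, Differentiable ℝ fun s => ((E s)ᴴ * E s) i j := fun i j => by
    simp only [mul_apply, conjTranspose_apply]
    exact Differentiable.fun_sum fun k _ => ((hE k i).star).mul (hE k j)
  have hRd : DifferentiableAt ℝ R t := Matrix.differentiableAt_of_differentiable_apply
    fun i j => differentiable_apply_of_conjTranspose_mul_self hA hR hRdiag hRA i j t
  have hunit : ∀ s, IsUnit (R s) := fun s => (isUnit_iff_isUnit_det _).2 <| (hR s).isUnit_det
    fun i => Complex.ne_zero_of_exists_pos_eq_ofReal (hRdiag s i)
  have hQE : Q = fun s => E s * Ring.inverse (R s) := funext fun s => by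
    rw [hQR, mul_assoc, ← nonsing_inv_eq_ringInverse,
      mul_nonsing_inv _ ((isUnit_iff_isUnit_det _).1 (hunit s)), mul_one]
  refine ⟨?_, hRd⟩
  rw [hQE]
  exact (Matrix.differentiableAt_of_differentiable_apply fun i j => hE i j t).mul
    (hRd.inverse (hunit t))

theorem hasDerivAt_conj_of_QR_exp {M : Matrix (Fin n) (Fin n) ℂ}
    {Q : ℝ → Matrix (Fin n) (Fin n) ℂ} (hQ : ∀ s, Q s ∈ unitaryGroup (Fin n) ℂ)
    (hR : ∀ s, (R s).BlockTriangular id)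
    (hRdiag : ∀ s i, ∃ r : ℝ, 0 < r ∧ R s i i = r)
    (hQR : ∀ s : ℝ, NormedSpace.exp ((s : ℂ) • M) = Q s * R s) (t : ℝ) :
    HasDerivAt (fun s => (Q s)ᴴ * M * Q s)
      ((Q t)ᴴ * M * Q t * kProj ((Q t)ᴴ * M * Q t) -
        kProj ((Q t)ᴴ * M * Q t) * ((Q t)ᴴ * M * Q t)) t := by
  have hexp : ∀ s, HasDerivAt (fun s => Q s * R s) (M * (Q s * R s)) s := fun s => by
    simpa only [hQR] using hasDerivAt_exp_ofReal_smul M s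
  obtain ⟨hQd, hRd⟩ := differentiableAt_factors_of_QR
    (fun i j s => ((Matrix.hasDerivAt_iff_hasDerivAt_apply.1 (hexp s)) i j).differentiableAt)
    hQ hR hRdiag (fun _ => rfl) t
  have hRt : IsUnit (R t).det := (hR t).isUnit_det
    fun i => Complex.ne_zero_of_exists_pos_eq_ofReal (hRdiag t i)
  have hU : IsUpperTriangularRealDiag (deriv R t * (R t)⁻¹) :=
    (IsUpperTriangularRealDiag.of_hasDerivAt (fun s => .of_posDiag (hR s) (hRdiag s))
      hRd.hasDerivAt).mul ((IsUpperTriangularRealDiag.of_posDiag (hR t) (hRdiag t)).inv hRt)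
  have hN : (Q t)ᴴ * M * Q t = (Q t)ᴴ * deriv Q t + deriv R t * (R t)⁻¹ :=
    mul_mul_eq_add_of_leibniz (mem_unitaryGroup_iff'.1 (hQ t)) (mul_nonsing_inv _ hRt)
      ((hexp t).unique (hQd.hasDerivAt.mul hRd.hasDerivAt))
  have hk : kProj ((Q t)ᴴ * M * Q t) = (Q t)ᴴ * deriv Q t := by
    rw [hN]
    exact kProj_add_of_conjTranspose_eq_neg
      (conjTranspose_mul_deriv_of_mem_unitaryGroup hQ hQd.hasDerivAt) hU
  rw [hk]
  exact hasDerivAt_conjTranspose_mul_mul_of_mem_unitaryGroup M hQ hQd.hasDerivAt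

end MatrixCalculus

theorem stmt17_general {n : ℕ} (M : Matrix (Fin n) (Fin n) ℂ)
    (Q R : ℝ → Matrix (Fin n) (Fin n) ℂ)
    (hQ : ∀ t, Q t ∈ Matrix.unitaryGroup (Fin n) ℂ)
    (hR : ∀ t, (R t).BlockTriangular id)
    (hRdiag : ∀ t i, ∃ r : ℝ, 0 < r ∧ R t i i = (r : ℂ))
    (hQR : ∀ t : ℝ, NormedSpace.exp ((t : ℂ) • M) = Q t * R t) :
    ∀ (t : ℝ) (i j : Fin n),
      HasDerivAt (fun s : ℝ => ((Q s)⁻¹ * M * Q s) i j)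
        ((((Q t)⁻¹ * M * Q t) * kProj ((Q t)⁻¹ * M * Q t) -
          kProj ((Q t)⁻¹ * M * Q t) * ((Q t)⁻¹ * M * Q t)) i j) t := by
  intro t i j
  have hinv : ∀ s, (Q s)⁻¹ = (Q s)ᴴ := fun s => inv_eq_left_inv (mem_unitaryGroup_iff'.1 (hQ s))
  simp only [hinv]
  exact Matrix.hasDerivAt_iff_hasDerivAt_apply.1 (hasDerivAt_conj_of_QR_exp hQ hR hRdiag hQR t) i j

/-- Symes: let `M` be Hermitian and for each `t` let
`exp(tM) = Q(t) R(t)` be the QR-decomposition (`Q(t)` unitary, `R(t)` upper triangular with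
positive real diagonal). Then `M(t) := Q(t)⁻¹ M Q(t)` solves the symmetric Toda lattice
equation `dM/dt = [M(t), k(M(t))]`. -/
theorem stmt17 {n : ℕ} (M : Matrix (Fin n) (Fin n) ℂ) (hM : M.IsHermitian)
    (Q R : ℝ → Matrix (Fin n) (Fin n) ℂ)
    (hQ : ∀ t, Q t ∈ Matrix.unitaryGroup (Fin n) ℂ)
    (hR : ∀ t, (R t).BlockTriangular id)
    (hRdiag : ∀ t i, ∃ r : ℝ, 0 < r ∧ R t i i = (r : ℂ))
    (hQR : ∀ t : ℝ, NormedSpace.exp ((t : ℂ) • M) = Q t * R t) :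
    ∀ (t : ℝ) (i j : Fin n),
      HasDerivAt (fun s : ℝ => ((Q s)⁻¹ * M * Q s) i j)
        ((((Q t)⁻¹ * M * Q t) * kProj ((Q t)⁻¹ * M * Q t) -
          kProj ((Q t)⁻¹ * M * Q t) * ((Q t)⁻¹ * M * Q t)) i j) t :=
  stmt17_general M Q R hQ hR hRdiag hQR
end
end
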